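/- arXiv:1703.09011 — 2 statements merged into one kernel-verified Lean document; each statement's English description precedes it below -/
import Mathlib

section
/- Fix an integer b ≥ 2 and set ζ_h = ∑_{j≥h} (b−1)² / ((b^j − 1)(b^{j+1} − 1)). Then for each h ≥ 1: ((b−1)/(b+1))·(b^{1−2h} + b^{1−3h}) < ζ_h < (1 + 1/(b^h − 1))·(1 + 1/(b^{h+1} − 1))·((b−1)/(b+1))·b^{1−2h}. -/
/-!
Write `x = b^h`, so that the `j = h + i` term of `ζ_h` is `(b−1)² / ((x bⁱ − 1)(x bⁱ⁺¹ − 1))`.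
Since `(x − 1) z ≤ x z − 1` for `z ≥ 1`, this term is at most `b^{−2i}` times the `i = 0` term,
strictly for `i ≥ 1`; summing the geometric series gives exactly the upper bound.
For the lower bound, `1/((y−1)(yb−1)) > 1/(y²b) + (b+1)/(y³b²)` for `y > 1`; summing the two
geometric series beats the stated bound because `(b+1)² > b² + b + 1`.
-/

/-- `ζ_h = ∑_{j ≥ h} (b−1)² / ((b^j − 1)(b^{j+1} − 1))`, written as a sum over `j = h + i`. -/
noncomputable def zeta (b h : ℕ) : ℝ :=
  ∑' i : ℕ, ((b : ℝ) - 1) ^ 2 / (((b : ℝ) ^ (h + i) - 1) * ((b : ℝ) ^ (h + i + 1) - 1))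

/-- The `j`-th term of `ζ`, as a function of `y = B^j`. -/
noncomputable def zetaTerm (B y : ℝ) : ℝ := (B - 1) ^ 2 / ((y - 1) * (y * B - 1))

lemma zeta_eq_tsum_zetaTerm (b h : ℕ) :
    zeta b h = ∑' i : ℕ, zetaTerm b ((b : ℝ) ^ h * (b : ℝ) ^ i) := by
  simp only [zeta, zetaTerm, pow_add, pow_one]

lemma zpow_one_sub_mul_natCast {B : ℝ} (hB : B ≠ 0) (k h : ℕ) :
    B ^ (1 - k * (h : ℤ)) = B / (B ^ h) ^ k := by
  rw [zpow_sub₀ hB, zpow_one, ← pow_mul', ← zpow_natCast]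
  push_cast
  rfl

lemma hasSum_inv_pow_pow {B : ℝ} (hB : 1 < B) {n : ℕ} (hn : n ≠ 0) :
    HasSum (fun i : ℕ => ((B ^ i) ^ n)⁻¹) (B ^ n / (B ^ n - 1)) := by
  have hsum := hasSum_geometric_of_lt_one (inv_nonneg.2 (by positivity : (0 : ℝ) ≤ B ^ n))
    (inv_lt_one_of_one_lt₀ (one_lt_pow₀ hB hn))
  convert hsum using 1
  · ext i
    rw [inv_pow, pow_right_comm]
  · field_simp

namespace zetaTerm

variable {B x y z : ℝ}

lemma denom_pos (hB : 1 < B) (hy : 1 < y) : 0 < (y - 1) * (y * B - 1) :=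
  mul_pos (by linarith) (by nlinarith)

lemma pos (hB : 1 < B) (hy : 1 < y) : 0 < zetaTerm B y :=
  div_pos (by nlinarith) (denom_pos hB hy)

lemma mul_lt_div_sq (hB : 1 < B) (hx : 1 < x) (hz : 1 < z) :
    zetaTerm B (x * z) < zetaTerm B x / z ^ 2 := by
  have hxz : 1 < x * z := one_lt_mul_of_lt_of_le hx hz.le
  have hdenom : (x - 1) * (x * B - 1) * z ^ 2 < (x * z - 1) * (x * z * B - 1) := by
    have h₁ : (x - 1) * z < x * z - 1 := by nlinarith
    have h₂ : (x * B - 1) * z < x * z * B - 1 := by nlinarith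
    calc (x - 1) * (x * B - 1) * z ^ 2 = ((x - 1) * z) * ((x * B - 1) * z) := by ring
      _ < (x * z - 1) * (x * z * B - 1) := mul_lt_mul'' h₁ h₂ (by nlinarith) (by nlinarith)
  rw [zetaTerm, zetaTerm, div_div]
  exact div_lt_div_of_pos_left (by nlinarith)
    (mul_pos (denom_pos hB hx) (by positivity)) hdenom

lemma mul_le_div_sq (hB : 1 < B) (hx : 1 < x) (hz : 1 ≤ z) :
    zetaTerm B (x * z) ≤ zetaTerm B x / z ^ 2 := by
  rcases hz.eq_or_lt with rfl | hz
  · simp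
  · exact (mul_lt_div_sq hB hx hz).le

lemma lower_lt (hB : 1 < B) (hy : 1 < y) :
    (B - 1) ^ 2 * (1 / (y ^ 2 * B) + (B + 1) / (y ^ 3 * B ^ 2)) < zetaTerm B y := by
  have hB0 : 0 < B := by linarith
  -- `y³B² − (yB + B + 1)(y − 1)(yB − 1) = (y − 1)(B² + B + 1) + B²`
  have hkey : (y * B + B + 1) * ((y - 1) * (y * B - 1)) < y ^ 3 * B ^ 2 := by
    nlinarith [mul_nonneg (by linarith : (0 : ℝ) ≤ y - 1) hB0.le,
      mul_nonneg (mul_nonneg (by linarith : (0 : ℝ) ≤ y - 1) hB0.le) hB0.le]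
  rw [zetaTerm, lt_div_iff₀ (denom_pos hB hy)]
  field_simp
  nlinarith [mul_lt_mul_of_pos_left hkey (by nlinarith : (0 : ℝ) < (B - 1) ^ 2)]

lemma hasSum_upper (hB : 1 < B) :
    HasSum (fun i : ℕ => zetaTerm B x / (B ^ i) ^ 2) (zetaTerm B x * (B ^ 2 / (B ^ 2 - 1))) := by
  simpa only [div_eq_mul_inv] using (hasSum_inv_pow_pow hB two_ne_zero).mul_left (zetaTerm B x)

lemma hasSum_lower (hB : 1 < B) (hx : 1 < x) :
    HasSum
      (fun i : ℕ => (B - 1) ^ 2 * (1 / ((x * B ^ i) ^ 2 * B) + (B + 1) / ((x * B ^ i) ^ 3 * B ^ 2)))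
      ((B - 1) * B / (x ^ 2 * (B + 1)) + (B - 1) * (B + 1) * B / (x ^ 3 * (B ^ 2 + B + 1))) := by
  have hsum := ((hasSum_inv_pow_pow hB two_ne_zero).mul_left ((B - 1) ^ 2 / (x ^ 2 * B))).add
    ((hasSum_inv_pow_pow hB three_ne_zero).mul_left ((B - 1) ^ 2 * (B + 1) / (x ^ 3 * B ^ 2)))
  have hval : (B - 1) ^ 2 / (x ^ 2 * B) * (B ^ 2 / (B ^ 2 - 1)) +
      (B - 1) ^ 2 * (B + 1) / (x ^ 3 * B ^ 2) * (B ^ 3 / (B ^ 3 - 1)) =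
      (B - 1) * B / (x ^ 2 * (B + 1)) + (B - 1) * (B + 1) * B / (x ^ 3 * (B ^ 2 + B + 1)) := by
    rw [show B ^ 2 - 1 = (B - 1) * (B + 1) by ring,
      show B ^ 3 - 1 = (B - 1) * (B ^ 2 + B + 1) by ring]
    field_simp
  rw [← hval]
  exact hsum.congr_fun fun i => by field_simp

lemma summable (hB : 1 < B) (hx : 1 < x) : Summable fun i : ℕ => zetaTerm B (x * B ^ i) :=
  (hasSum_upper hB).summable.of_nonneg_of_le
    (fun _ => (pos hB (one_lt_mul_of_lt_of_le hx (one_le_pow₀ hB.le))).le)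
    (fun _ => mul_le_div_sq hB hx (one_le_pow₀ hB.le))

lemma tsum_lt (hB : 1 < B) (hx : 1 < x) :
    ∑' i : ℕ, zetaTerm B (x * B ^ i) <
      (1 + 1 / (x - 1)) * (1 + 1 / (x * B - 1)) * ((B - 1) / (B + 1)) * (B / x ^ 2) := by
  have hlt := hasSum_lt (fun i => mul_le_div_sq hB hx (one_le_pow₀ hB.le))
    (by simpa using mul_lt_div_sq hB hx hB) (summable hB hx).hasSum (hasSum_upper hB) (i := 1)
  refine hlt.trans_eq ?_
  have hx₁ : x - 1 ≠ 0 := by linarith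
  have hxB : x * B - 1 ≠ 0 := by nlinarith
  rw [zetaTerm, show B ^ 2 - 1 = (B - 1) * (B + 1) by ring, one_add_div hx₁, one_add_div hxB]
  field_simp
  ring

lemma lt_tsum (hB : 1 < B) (hx : 1 < x) :
    (B - 1) / (B + 1) * (B / x ^ 2 + B / x ^ 3) < ∑' i : ℕ, zetaTerm B (x * B ^ i) := by
  have hcubic : (B - 1) * B / (x ^ 3 * (B + 1)) <
      (B - 1) * (B + 1) * B / (x ^ 3 * (B ^ 2 + B + 1)) := by
    rw [div_lt_div_iff₀ (by positivity) (by positivity)]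
    -- the difference of the two sides is `(B − 1) B x³ · B`
    have hB₁ : 0 < B - 1 := sub_pos.2 hB
    have : 0 < (B - 1) * B * x ^ 3 * B := by positivity
    nlinarith
  calc (B - 1) / (B + 1) * (B / x ^ 2 + B / x ^ 3)
      = (B - 1) * B / (x ^ 2 * (B + 1)) + (B - 1) * B / (x ^ 3 * (B + 1)) := by
        field_simp
    _ < (B - 1) * B / (x ^ 2 * (B + 1)) + (B - 1) * (B + 1) * B / (x ^ 3 * (B ^ 2 + B + 1)) := by
        gcongr
    _ ≤ ∑' i : ℕ, zetaTerm B (x * B ^ i) :=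
        hasSum_le (fun i => (lower_lt hB (one_lt_mul_of_lt_of_le hx (one_le_pow₀ hB.le))).le)
          (hasSum_lower hB hx) (summable hB hx).hasSum

end zetaTerm

/-- For each `h ≥ 1`,
`((b−1)/(b+1))·(b^{1−2h} + b^{1−3h}) < ζ_h <
 (1 + 1/(b^h − 1))·(1 + 1/(b^{h+1} − 1))·((b−1)/(b+1))·b^{1−2h}`. -/
theorem stmt5 (b : ℕ) (hb : 2 ≤ b) (h : ℕ) (hh : 1 ≤ h) :
    (((b : ℝ) - 1) / ((b : ℝ) + 1)) *
        ((b : ℝ) ^ (1 - 2 * (h : ℤ)) + (b : ℝ) ^ (1 - 3 * (h : ℤ))) < zeta b h ∧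
    zeta b h < (1 + 1 / ((b : ℝ) ^ h - 1)) * (1 + 1 / ((b : ℝ) ^ (h + 1) - 1)) *
        (((b : ℝ) - 1) / ((b : ℝ) + 1)) * (b : ℝ) ^ (1 - 2 * (h : ℤ)) := by
  have hB : 1 < (b : ℝ) := by exact_mod_cast hb
  have hx : 1 < (b : ℝ) ^ h := one_lt_pow₀ hB (by omega)
  have hB0 : (b : ℝ) ≠ 0 := by positivity
  have h₂ : (b : ℝ) ^ (1 - 2 * (h : ℤ)) = b / (b ^ h) ^ 2 :=
    mod_cast zpow_one_sub_mul_natCast hB0 2 h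
  have h₃ : (b : ℝ) ^ (1 - 3 * (h : ℤ)) = b / (b ^ h) ^ 3 :=
    mod_cast zpow_one_sub_mul_natCast hB0 3 h
  rw [zeta_eq_tsum_zetaTerm, pow_succ, h₂, h₃]
  exact ⟨zetaTerm.lt_tsum hB hx, zetaTerm.tsum_lt hB hx⟩
end

section
/- Fix an integer b ≥ 2, let ζ_h = ∑_{j≥h} (b−1)²/((b^j−1)(b^{j+1}−1)), and Ξ_k = (b−1)·b^k·∑_{h>k} b^{h−1}·ζ_h. Then for every k ≥ 0: ((b−1)/(b+1))·(1 + b^{−k}/(b+1)) < Ξ_k < ((b−1)/(b+1))·(1 + 1/(b^{k+1}−1))·(1 + 1/(b^{k+2}−1)). -/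
/-- `Ξ_k = (b−1)·b^k·∑_{h > k} b^{h−1}·ζ_h`, written as a sum over `h = k + 1 + i`. -/
noncomputable def Xi (b k : ℕ) : ℝ :=
  ((b : ℝ) - 1) * (b : ℝ) ^ k * ∑' i : ℕ, (b : ℝ) ^ (k + i) * zeta b (k + 1 + i)

section Aux
variable {b : ℕ} (hb : 2 ≤ b)
include hb

private lemma B2 : (2:ℝ) ≤ (b:ℝ) := by exact_mod_cast hb
private lemma B1 : (1:ℝ) < (b:ℝ) := lt_of_lt_of_le one_lt_two (B2 hb)
private lemma Bpos : (0:ℝ) < (b:ℝ) := lt_trans one_pos (B1 hb)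
private lemma Bne : (b:ℝ) ≠ 0 := ne_of_gt (Bpos hb)

private lemma pow1lt {n : ℕ} (hn : n ≠ 0) : (1:ℝ) < (b:ℝ)^n :=
  one_lt_pow₀ (B1 hb) hn

private lemma powsub_pos {n : ℕ} (hn : n ≠ 0) : (0:ℝ) < (b:ℝ)^n - 1 :=
  sub_pos.mpr (pow1lt hb hn)

/-- `B^i (B^h - 1) ≤ B^(h+i) - 1`. -/
private lemma factor_le (h i : ℕ) :
    (b:ℝ)^i * ((b:ℝ)^h - 1) ≤ (b:ℝ)^(h+i) - 1 := by
  have h1 : (1:ℝ) ≤ (b:ℝ)^i := one_le_pow₀ (le_of_lt (B1 hb))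
  have h2 : (b:ℝ)^(h+i) = (b:ℝ)^h * (b:ℝ)^i := pow_add _ _ _
  nlinarith

/-- upper termwise bound for ζ terms -/
private lemma term_le (h : ℕ) (hh : h ≠ 0) (i : ℕ) :
    ((b:ℝ)-1)^2 / (((b:ℝ)^(h+i) - 1) * ((b:ℝ)^(h+i+1) - 1)) ≤
    (((b:ℝ)-1)^2 / (((b:ℝ)^h - 1) * ((b:ℝ)^(h+1) - 1))) * (((b:ℝ)^2)⁻¹)^i := by
  have hD' : (0:ℝ) < (((b:ℝ)^h - 1) * ((b:ℝ)^(h+1) - 1)) * ((b:ℝ)^2)^i :=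
    mul_pos (mul_pos (powsub_pos hb hh) (powsub_pos hb (by omega)))
      (pow_pos (pow_pos (Bpos hb) 2) i)
  have key : (((b:ℝ)^h - 1) * ((b:ℝ)^(h+1) - 1)) * ((b:ℝ)^2)^i ≤
      ((b:ℝ)^(h+i) - 1) * ((b:ℝ)^(h+i+1) - 1) := by
    have f1 := factor_le hb h i
    have f2 := factor_le hb (h+1) i
    have e : ((b:ℝ)^2)^i = (b:ℝ)^i * (b:ℝ)^i := by
      rw [← pow_mul, two_mul, pow_add]
    calc (((b:ℝ)^h - 1) * ((b:ℝ)^(h+1) - 1)) * ((b:ℝ)^2)^i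
        = ((b:ℝ)^i * ((b:ℝ)^h - 1)) * ((b:ℝ)^i * ((b:ℝ)^(h+1) - 1)) := by rw [e]; ring
      _ ≤ ((b:ℝ)^(h+i) - 1) * ((b:ℝ)^(h+1+i) - 1) :=
          mul_le_mul f1 f2 (mul_nonneg (by positivity) (le_of_lt (powsub_pos hb (by omega))))
            (le_of_lt (powsub_pos hb (by omega)))
      _ = ((b:ℝ)^(h+i) - 1) * ((b:ℝ)^(h+i+1) - 1) := by rw [show h+1+i = h+i+1 by omega]
  have hrw : (((b:ℝ)-1)^2 / (((b:ℝ)^h - 1) * ((b:ℝ)^(h+1) - 1))) * (((b:ℝ)^2)⁻¹)^i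
      = ((b:ℝ)-1)^2 / ((((b:ℝ)^h - 1) * ((b:ℝ)^(h+1) - 1)) * ((b:ℝ)^2)^i) := by
    rw [inv_pow, mul_comm, inv_mul_eq_div, div_div]
  rw [hrw]
  exact div_le_div_of_nonneg_left (by positivity) hD' key

private lemma term_nonneg (h i : ℕ) (hh : h ≠ 0) :
    (0:ℝ) ≤ ((b:ℝ)-1)^2 / (((b:ℝ)^(h+i) - 1) * ((b:ℝ)^(h+i+1) - 1)) := by
  have := mul_pos (powsub_pos hb (show h+i ≠ 0 by omega)) (powsub_pos hb (show h+i+1 ≠ 0 by omega))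
  positivity

private lemma rgeo2 : (0:ℝ) ≤ ((b:ℝ)^2)⁻¹ ∧ ((b:ℝ)^2)⁻¹ < 1 := by
  constructor
  · positivity
  · rw [inv_lt_one_iff₀]; right; exact pow1lt hb two_ne_zero

private lemma zeta_summable (h : ℕ) (hh : h ≠ 0) :
    Summable (fun i : ℕ => ((b:ℝ)-1)^2 / (((b:ℝ)^(h+i) - 1) * ((b:ℝ)^(h+i+1) - 1))) :=
  Summable.of_nonneg_of_le (fun i => term_nonneg hb h i hh) (term_le hb h hh)
    ((summable_geometric_of_lt_one (rgeo2 hb).1 (rgeo2 hb).2).mul_left _)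

private lemma zeta_nonneg (h : ℕ) (hh : h ≠ 0) : 0 ≤ zeta b h :=
  tsum_nonneg (fun i => term_nonneg hb h i hh)

/-- strict upper bound for ζ -/
private lemma zeta_lt (h : ℕ) (hh : h ≠ 0) :
    zeta b h < ((b:ℝ)-1)^2 * (b:ℝ)^2 / (((b:ℝ)^2 - 1) * (((b:ℝ)^h - 1) * ((b:ℝ)^(h+1) - 1))) := by
  have hsumg : Summable (fun i : ℕ =>
      (((b:ℝ)-1)^2 / (((b:ℝ)^h - 1) * ((b:ℝ)^(h+1) - 1))) * (((b:ℝ)^2)⁻¹)^i) :=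
    (summable_geometric_of_lt_one (rgeo2 hb).1 (rgeo2 hb).2).mul_left _
  have hstrict : ((b:ℝ)-1)^2 / (((b:ℝ)^(h+1) - 1) * ((b:ℝ)^(h+1+1) - 1)) <
      (((b:ℝ)-1)^2 / (((b:ℝ)^h - 1) * ((b:ℝ)^(h+1) - 1))) * (((b:ℝ)^2)⁻¹)^1 := by
    have hA : (0:ℝ) < ((b:ℝ)-1)^2 := by nlinarith [B2 hb]
    have hrw : (((b:ℝ)-1)^2 / (((b:ℝ)^h - 1) * ((b:ℝ)^(h+1) - 1))) * (((b:ℝ)^2)⁻¹)^1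
        = ((b:ℝ)-1)^2 / ((((b:ℝ)^h - 1) * ((b:ℝ)^(h+1) - 1)) * ((b:ℝ)^2)^1) := by
      rw [inv_pow, mul_comm, inv_mul_eq_div, div_div]
    rw [hrw]
    apply div_lt_div_of_pos_left hA
    · exact mul_pos (mul_pos (powsub_pos hb hh) (powsub_pos hb (by omega)))
        (pow_pos (pow_pos (Bpos hb) 2) 1)
    · -- (B^h-1)(B^{h+1}-1) * B^2 < (B^{h+1}-1)(B^{h+2}-1)
      have e1 : (b:ℝ)^(h+1+1) = (b:ℝ)^h * (b:ℝ)^2 := by rw [← pow_add]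
      have e2 : (b:ℝ)^(h+1) = (b:ℝ)^h * (b:ℝ) := by rw [pow_succ]
      have hp := powsub_pos hb (show h+1 ≠ 0 by omega)
      have hB2 : (1:ℝ) < (b:ℝ)^2 := pow1lt hb two_ne_zero
      nlinarith [pow_pos (Bpos hb) h]
  have := Summable.tsum_lt_tsum (term_le hb h hh) hstrict (zeta_summable hb h hh) hsumg
  rw [tsum_mul_left, tsum_geometric_of_lt_one (rgeo2 hb).1 (rgeo2 hb).2] at this
  refine lt_of_lt_of_eq this ?_
  have h1 : ((b:ℝ)^h - 1) ≠ 0 := ne_of_gt (powsub_pos hb hh)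
  have h2 : ((b:ℝ)^(h+1) - 1) ≠ 0 := ne_of_gt (powsub_pos hb (by omega))
  have h3 : ((b:ℝ)^2 - 1) ≠ 0 := ne_of_gt (powsub_pos hb two_ne_zero)
  have h4 := Bne hb
  field_simp
  try exact Or.inl trivial

private lemma rgeo3 : (0:ℝ) ≤ ((b:ℝ)^3)⁻¹ ∧ ((b:ℝ)^3)⁻¹ < 1 := by
  constructor
  · positivity
  · rw [inv_lt_one_iff₀]; right; exact pow1lt hb three_ne_zero

/-- lower termwise bound for ζ terms -/
private lemma term_ge (h : ℕ) (hh : h ≠ 0) (i : ℕ) :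
    ((b:ℝ)-1)^2 * ( (1/(b:ℝ)^(2*h+1)) * (((b:ℝ)^2)⁻¹)^i
                  + (1/(b:ℝ)^(3*h+1)) * (((b:ℝ)^3)⁻¹)^i
                  + (1/(b:ℝ)^(3*h+2)) * (((b:ℝ)^3)⁻¹)^i )
      ≤ ((b:ℝ)-1)^2 / (((b:ℝ)^(h+i) - 1) * ((b:ℝ)^(h+i+1) - 1)) := by
  have hBne := Bne hb
  have hXpos : (0:ℝ) < (b:ℝ)^(h+i) := pow_pos (Bpos hb) _
  have hXne : ((b:ℝ)^(h+i)) ≠ 0 := ne_of_gt hXpos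
  have hX2 : (2:ℝ) ≤ (b:ℝ)^(h+i) :=
    le_trans (B2 hb) (by simpa using pow_le_pow_right₀ (le_of_lt (B1 hb)) (show 1 ≤ h+i by omega))
  have e1 : (1/(b:ℝ)^(2*h+1)) * (((b:ℝ)^2)⁻¹)^i = 1/((b:ℝ) * ((b:ℝ)^(h+i))^2) := by
    rw [inv_pow, ← pow_mul, ← pow_mul, one_div, ← mul_inv, ← pow_add, one_div]
    congr 2
    · rw [← pow_succ']
      congr 1
      omega
  have e2 : (1/(b:ℝ)^(3*h+1)) * (((b:ℝ)^3)⁻¹)^i = 1/((b:ℝ) * ((b:ℝ)^(h+i))^3) := by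
    rw [inv_pow, ← pow_mul, ← pow_mul, one_div, ← mul_inv, ← pow_add, one_div]
    congr 2
    · rw [← pow_succ']
      congr 1
      omega
  have e3 : (1/(b:ℝ)^(3*h+2)) * (((b:ℝ)^3)⁻¹)^i = 1/((b:ℝ)^2 * ((b:ℝ)^(h+i))^3) := by
    rw [inv_pow, ← pow_mul, ← pow_mul, one_div, ← mul_inv, ← pow_add, one_div]
    congr 2
    · rw [← pow_add]
      congr 1
      omega
  rw [e1, e2, e3]
  set X := (b:ℝ)^(h+i) with hXdef
  have eX : (b:ℝ)^(h+i+1) = (b:ℝ) * X := by rw [hXdef, ← pow_succ']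
  rw [eX]
  have hsum : 1/((b:ℝ)*X^2) + 1/((b:ℝ)*X^3) + 1/((b:ℝ)^2*X^3)
      = ((b:ℝ)*X + (b:ℝ) + 1)/((b:ℝ)^2*X^3) := by
    field_simp
  rw [hsum, mul_div_assoc']
  have hd1 : (0:ℝ) < (X - 1) * ((b:ℝ)*X - 1) := by
    apply mul_pos <;> nlinarith [B2 hb]
  have hd2 : (0:ℝ) < (b:ℝ)^2 * X^3 := by positivity
  rw [div_le_div_iff₀ hd2 hd1]
  have key : ((b:ℝ)*X + (b:ℝ) + 1) * ((X - 1) * ((b:ℝ)*X - 1)) ≤ (b:ℝ)^2 * X^3 := by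
    nlinarith [B2 hb, hX2]
  nlinarith [sq_nonneg ((b:ℝ)-1), key, mul_le_mul_of_nonneg_left key (sq_nonneg ((b:ℝ)-1))]

private lemma lower_summand_summable (h : ℕ) :
    Summable (fun i : ℕ => ((b:ℝ)-1)^2 * ( (1/(b:ℝ)^(2*h+1)) * (((b:ℝ)^2)⁻¹)^i
                  + (1/(b:ℝ)^(3*h+1)) * (((b:ℝ)^3)⁻¹)^i
                  + (1/(b:ℝ)^(3*h+2)) * (((b:ℝ)^3)⁻¹)^i )) := by
  apply Summable.mul_left
  apply Summable.add
  apply Summable.add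
  · exact (summable_geometric_of_lt_one (rgeo2 hb).1 (rgeo2 hb).2).mul_left _
  · exact (summable_geometric_of_lt_one (rgeo3 hb).1 (rgeo3 hb).2).mul_left _
  · exact (summable_geometric_of_lt_one (rgeo3 hb).1 (rgeo3 hb).2).mul_left _

/-- lower bound for ζ -/
private lemma zeta_ge (h : ℕ) (hh : h ≠ 0) :
    ((b:ℝ)-1)^2 * ( (1/(b:ℝ)^(2*h+1)) * (1 - ((b:ℝ)^2)⁻¹)⁻¹
                  + (1/(b:ℝ)^(3*h+1)) * (1 - ((b:ℝ)^3)⁻¹)⁻¹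
                  + (1/(b:ℝ)^(3*h+2)) * (1 - ((b:ℝ)^3)⁻¹)⁻¹ ) ≤ zeta b h := by
  have hle := Summable.tsum_le_tsum (term_ge hb h hh) (lower_summand_summable hb h) (zeta_summable hb h hh)
  refine le_trans (le_of_eq ?_) hle
  rw [tsum_mul_left]
  congr 1
  rw [Summable.tsum_add (Summable.add ((summable_geometric_of_lt_one (rgeo2 hb).1 (rgeo2 hb).2).mul_left _)
        ((summable_geometric_of_lt_one (rgeo3 hb).1 (rgeo3 hb).2).mul_left _))
      ((summable_geometric_of_lt_one (rgeo3 hb).1 (rgeo3 hb).2).mul_left _),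
    Summable.tsum_add ((summable_geometric_of_lt_one (rgeo2 hb).1 (rgeo2 hb).2).mul_left _)
      ((summable_geometric_of_lt_one (rgeo3 hb).1 (rgeo3 hb).2).mul_left _),
    tsum_mul_left, tsum_mul_left, tsum_mul_left,
    tsum_geometric_of_lt_one (rgeo2 hb).1 (rgeo2 hb).2,
    tsum_geometric_of_lt_one (rgeo3 hb).1 (rgeo3 hb).2]

private lemma rgeo1 : (0:ℝ) ≤ ((b:ℝ))⁻¹ ∧ ((b:ℝ))⁻¹ < 1 := by
  constructor
  · positivity
  · rw [inv_lt_one_iff₀]; right; exact B1 hb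

/-- outer termwise upper bound -/
private lemma outer_le (k i : ℕ) :
    (b:ℝ)^(k+i) * zeta b (k+1+i) ≤
      (((b:ℝ)-1)^2 * (b:ℝ)^(k+2) / (((b:ℝ)^2-1) * (((b:ℝ)^(k+1)-1) * ((b:ℝ)^(k+2)-1))))
        * ((b:ℝ)⁻¹)^i := by
  have hz := le_of_lt (zeta_lt hb (k+1+i) (by omega))
  have hfac : (((b:ℝ)^(k+1) - 1) * ((b:ℝ)^(k+1+1) - 1)) * ((b:ℝ)^2)^i ≤
      ((b:ℝ)^(k+1+i) - 1) * ((b:ℝ)^(k+1+i+1) - 1) := by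
    have f1 := factor_le hb (k+1) i
    have f2 := factor_le hb (k+2) i
    have e : ((b:ℝ)^2)^i = (b:ℝ)^i * (b:ℝ)^i := by rw [← pow_mul, two_mul, pow_add]
    calc (((b:ℝ)^(k+1) - 1) * ((b:ℝ)^(k+1+1) - 1)) * ((b:ℝ)^2)^i
        = ((b:ℝ)^i * ((b:ℝ)^(k+1) - 1)) * ((b:ℝ)^i * ((b:ℝ)^(k+2) - 1)) := by rw [e]; ring_nf
      _ ≤ ((b:ℝ)^(k+1+i) - 1) * ((b:ℝ)^(k+2+i) - 1) :=
          mul_le_mul f1 f2 (mul_nonneg (by positivity) (le_of_lt (powsub_pos hb (by omega))))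
            (le_of_lt (powsub_pos hb (by omega)))
      _ = ((b:ℝ)^(k+1+i) - 1) * ((b:ℝ)^(k+1+i+1) - 1) := by rw [show k+2+i = k+1+i+1 by omega]
  have hz2 : zeta b (k+1+i) ≤ ((b:ℝ)-1)^2 * (b:ℝ)^2 /
      (((b:ℝ)^2 - 1) * ((((b:ℝ)^(k+1) - 1) * ((b:ℝ)^(k+1+1) - 1)) * ((b:ℝ)^2)^i)) := by
    refine le_trans hz (div_le_div_of_nonneg_left (by positivity) ?_ ?_)
    · exact mul_pos (powsub_pos hb two_ne_zero)
        (mul_pos (mul_pos (powsub_pos hb (by omega)) (powsub_pos hb (by omega)))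
          (pow_pos (pow_pos (Bpos hb) 2) i))
    · exact mul_le_mul_of_nonneg_left hfac (le_of_lt (powsub_pos hb two_ne_zero))
  refine le_trans (mul_le_mul_of_nonneg_left hz2 (by positivity)) (le_of_eq ?_)
  have h1 : ((b:ℝ)^(k+1) - 1) ≠ 0 := ne_of_gt (powsub_pos hb (by omega))
  have h2 : ((b:ℝ)^(k+2) - 1) ≠ 0 := ne_of_gt (powsub_pos hb (by omega))
  have h3 : ((b:ℝ)^2 - 1) ≠ 0 := ne_of_gt (powsub_pos hb two_ne_zero)
  have h4 := Bne hb
  rw [show k+1+1 = k+2 by omega, inv_pow]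
  field_simp
  ring

private lemma outer_nonneg (k i : ℕ) : (0:ℝ) ≤ (b:ℝ)^(k+i) * zeta b (k+1+i) :=
  mul_nonneg (by positivity) (zeta_nonneg hb (k+1+i) (by omega))

private lemma outer_summable (k : ℕ) :
    Summable (fun i : ℕ => (b:ℝ)^(k+i) * zeta b (k+1+i)) :=
  Summable.of_nonneg_of_le (outer_nonneg hb k) (outer_le hb k)
    ((summable_geometric_of_lt_one (rgeo1 hb).1 (rgeo1 hb).2).mul_left _)

/-- strictness at i = 0 -/
private lemma outer_lt0 (k : ℕ) :
    (b:ℝ)^(k+0) * zeta b (k+1+0) <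
      (((b:ℝ)-1)^2 * (b:ℝ)^(k+2) / (((b:ℝ)^2-1) * (((b:ℝ)^(k+1)-1) * ((b:ℝ)^(k+2)-1))))
        * ((b:ℝ)⁻¹)^0 := by
  have hz := zeta_lt hb (k+1) (by omega)
  have hkpos : (0:ℝ) < (b:ℝ)^k := pow_pos (Bpos hb) k
  have h1 : ((b:ℝ)^(k+1) - 1) ≠ 0 := ne_of_gt (powsub_pos hb (by omega))
  have h2 : ((b:ℝ)^(k+2) - 1) ≠ 0 := ne_of_gt (powsub_pos hb (by omega))
  have h3 : ((b:ℝ)^2 - 1) ≠ 0 := ne_of_gt (powsub_pos hb two_ne_zero)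
  have h4 := Bne hb
  have := mul_lt_mul_of_pos_left hz hkpos
  rw [show k+1+0 = k+1 by omega, show k+0 = k by omega, pow_zero, mul_one]
  refine lt_of_lt_of_eq this ?_
  rw [show k+1+1 = k+2 by omega]
  field_simp
  ring

/-- outer termwise lower bound -/
private lemma outer_ge (k i : ℕ) :
    (((b:ℝ)-1)^2 / (((b:ℝ)^2-1) * (b:ℝ)^(k+1))) * ((b:ℝ)⁻¹)^i
      + (((b:ℝ)-1)^2 * ((b:ℝ)^2+(b:ℝ)) / (((b:ℝ)^3-1) * (b:ℝ)^(2*k+3))) * (((b:ℝ)^2)⁻¹)^i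
      ≤ (b:ℝ)^(k+i) * zeta b (k+1+i) := by
  have hzge := zeta_ge hb (k+1+i) (by omega)
  refine le_trans (le_of_eq ?_) (mul_le_mul_of_nonneg_left hzge (by positivity))
  have h2 : ((b:ℝ)^2 - 1) ≠ 0 := ne_of_gt (powsub_pos hb two_ne_zero)
  have h3 : ((b:ℝ)^3 - 1) ≠ 0 := ne_of_gt (powsub_pos hb three_ne_zero)
  have h4 := Bne hb
  have h5 : (1:ℝ) - ((b:ℝ)^2)⁻¹ ≠ 0 := ne_of_gt (sub_pos.mpr (rgeo2 hb).2)
  have h6 : (1:ℝ) - ((b:ℝ)^3)⁻¹ ≠ 0 := ne_of_gt (sub_pos.mpr (rgeo3 hb).2)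
  rw [inv_pow, inv_pow]
  field_simp
  ring

private lemma lower_geom_summable (k : ℕ) :
    Summable (fun i : ℕ =>
      (((b:ℝ)-1)^2 / (((b:ℝ)^2-1) * (b:ℝ)^(k+1))) * ((b:ℝ)⁻¹)^i
      + (((b:ℝ)-1)^2 * ((b:ℝ)^2+(b:ℝ)) / (((b:ℝ)^3-1) * (b:ℝ)^(2*k+3))) * (((b:ℝ)^2)⁻¹)^i) :=
  Summable.add ((summable_geometric_of_lt_one (rgeo1 hb).1 (rgeo1 hb).2).mul_left _)
    ((summable_geometric_of_lt_one (rgeo2 hb).1 (rgeo2 hb).2).mul_left _)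

end Aux

/-- For every `k ≥ 0`,
`((b−1)/(b+1))·(1 + b^{−k}/(b+1)) < Ξ_k <
 ((b−1)/(b+1))·(1 + 1/(b^{k+1} − 1))·(1 + 1/(b^{k+2} − 1))`. -/
theorem stmt7 (b : ℕ) (hb : 2 ≤ b) (k : ℕ) :
    (((b : ℝ) - 1) / ((b : ℝ) + 1)) * (1 + (b : ℝ) ^ (-(k : ℤ)) / ((b : ℝ) + 1)) < Xi b k ∧
    Xi b k < (((b : ℝ) - 1) / ((b : ℝ) + 1)) * (1 + 1 / ((b : ℝ) ^ (k + 1) - 1)) *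
        (1 + 1 / ((b : ℝ) ^ (k + 2) - 1)) := by

  have hB1 := B1 hb
  have hB2 := B2 hb
  have hBpos := Bpos hb
  have h4 := Bne hb
  have h1 : ((b:ℝ)^(k+1) - 1) ≠ 0 := ne_of_gt (powsub_pos hb (by omega))
  have h2 : ((b:ℝ)^(k+2) - 1) ≠ 0 := ne_of_gt (powsub_pos hb (by omega))
  have h3 : ((b:ℝ)^2 - 1) ≠ 0 := ne_of_gt (powsub_pos hb two_ne_zero)
  have h3' : ((b:ℝ)^3 - 1) ≠ 0 := ne_of_gt (powsub_pos hb three_ne_zero)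
  have hbp1 : ((b:ℝ) + 1) ≠ 0 := by positivity
  have hkpos : (0:ℝ) < (b:ℝ)^k := pow_pos hBpos k
  have hr1 : (1:ℝ) - ((b:ℝ))⁻¹ ≠ 0 := ne_of_gt (sub_pos.mpr (rgeo1 hb).2)
  have hr2 : (1:ℝ) - ((b:ℝ)^2)⁻¹ ≠ 0 := ne_of_gt (sub_pos.mpr (rgeo2 hb).2)
  have hcoef : (0:ℝ) < ((b:ℝ)-1) * (b:ℝ)^k := mul_pos (by linarith) hkpos
  have hbm1 : ((b:ℝ) - 1) ≠ 0 := by intro h; nlinarith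
  have g1 : (1 - ((b:ℝ))⁻¹)⁻¹ = (b:ℝ)/((b:ℝ)-1) := by
    rw [show (1 : ℝ) - ((b:ℝ))⁻¹ = ((b:ℝ)-1)/(b:ℝ) by field_simp, inv_div]
  have g2 : (1 - ((b:ℝ)^2)⁻¹)⁻¹ = (b:ℝ)^2/((b:ℝ)^2-1) := by
    rw [show (1 : ℝ) - ((b:ℝ)^2)⁻¹ = ((b:ℝ)^2-1)/(b:ℝ)^2 by field_simp, inv_div]
  constructor
  · -- lower bound
    have hsum := Summable.tsum_le_tsum (outer_ge hb k) (lower_geom_summable hb k) (outer_summable hb k)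
    rw [Summable.tsum_add ((summable_geometric_of_lt_one (rgeo1 hb).1 (rgeo1 hb).2).mul_left _)
        ((summable_geometric_of_lt_one (rgeo2 hb).1 (rgeo2 hb).2).mul_left _),
      tsum_mul_left, tsum_mul_left,
      tsum_geometric_of_lt_one (rgeo1 hb).1 (rgeo1 hb).2,
      tsum_geometric_of_lt_one (rgeo2 hb).1 (rgeo2 hb).2] at hsum
    have hXi : ((b:ℝ)-1) * (b:ℝ)^k *
        ((((b:ℝ)-1)^2 / (((b:ℝ)^2-1) * (b:ℝ)^(k+1))) * (1 - ((b:ℝ))⁻¹)⁻¹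
          + (((b:ℝ)-1)^2 * ((b:ℝ)^2+(b:ℝ)) / (((b:ℝ)^3-1) * (b:ℝ)^(2*k+3)))
            * (1 - ((b:ℝ)^2)⁻¹)⁻¹) ≤ Xi b k := by
      unfold Xi
      exact mul_le_mul_of_nonneg_left hsum (le_of_lt hcoef)
    refine lt_of_lt_of_le ?_ hXi
    have hE : ((b:ℝ)-1) * (b:ℝ)^k *
        ((((b:ℝ)-1)^2 / (((b:ℝ)^2-1) * (b:ℝ)^(k+1))) * (1 - ((b:ℝ))⁻¹)⁻¹
          + (((b:ℝ)-1)^2 * ((b:ℝ)^2+(b:ℝ)) / (((b:ℝ)^3-1) * (b:ℝ)^(2*k+3)))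
            * (1 - ((b:ℝ)^2)⁻¹)⁻¹)
        = ((b:ℝ)-1)/((b:ℝ)+1) + ((b:ℝ)-1)^2/(((b:ℝ)^3-1) * (b:ℝ)^k) := by
      have e1 : (b:ℝ)^(k+1) = (b:ℝ)*(b:ℝ)^k := by rw [pow_succ]; ring
      have e3 : (b:ℝ)^(2*k+3) = (b:ℝ)^3*((b:ℝ)^k)^2 := by
        rw [pow_add, two_mul, pow_add]; ring
      rw [e1, e3, g1, g2]
      field_simp
      ring
    rw [hE, zpow_neg, zpow_natCast]
    have hexp : (((b:ℝ)-1)/((b:ℝ)+1)) * (1 + ((b:ℝ)^k)⁻¹/((b:ℝ)+1))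
        = ((b:ℝ)-1)/((b:ℝ)+1) + ((b:ℝ)-1)/(((b:ℝ)+1)^2 * (b:ℝ)^k) := by
      field_simp
    rw [hexp]
    have hkey : ((b:ℝ)-1)/(((b:ℝ)+1)^2 * (b:ℝ)^k) < ((b:ℝ)-1)^2/(((b:ℝ)^3-1) * (b:ℝ)^k) := by
      rw [div_lt_div_iff₀ (by positivity) (mul_pos (powsub_pos hb three_ne_zero) hkpos)]
      have base : ((b:ℝ)-1)*((b:ℝ)^3-1) < ((b:ℝ)-1)^2*((b:ℝ)+1)^2 := by nlinarith
      calc ((b:ℝ)-1)*(((b:ℝ)^3-1)*(b:ℝ)^k) = (((b:ℝ)-1)*((b:ℝ)^3-1))*(b:ℝ)^k := by ring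
        _ < (((b:ℝ)-1)^2*((b:ℝ)+1)^2)*(b:ℝ)^k := by
            exact mul_lt_mul_of_pos_right base hkpos
        _ = ((b:ℝ)-1)^2*(((b:ℝ)+1)^2*(b:ℝ)^k) := by ring
    linarith
  · -- upper bound
    have hsum := Summable.tsum_lt_tsum (outer_le hb k) (outer_lt0 hb k) (outer_summable hb k)
      ((summable_geometric_of_lt_one (rgeo1 hb).1 (rgeo1 hb).2).mul_left _)
    rw [tsum_mul_left, tsum_geometric_of_lt_one (rgeo1 hb).1 (rgeo1 hb).2] at hsum
    have hXi : Xi b k < ((b:ℝ)-1) * (b:ℝ)^k *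
        ((((b:ℝ)-1)^2 * (b:ℝ)^(k+2) / (((b:ℝ)^2-1) * (((b:ℝ)^(k+1)-1) * ((b:ℝ)^(k+2)-1))))
          * (1 - ((b:ℝ))⁻¹)⁻¹) := by
      unfold Xi
      exact mul_lt_mul_of_pos_left hsum hcoef
    refine lt_of_lt_of_eq hXi ?_
    have e1 : (b:ℝ)^(k+1) = (b:ℝ)*(b:ℝ)^k := by rw [pow_succ]; ring
    have e2 : (b:ℝ)^(k+2) = (b:ℝ)^2*(b:ℝ)^k := by rw [pow_add]; ring
    have h1' : (b:ℝ)*(b:ℝ)^k - 1 ≠ 0 := by rw [← e1]; exact h1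
    have h2' : (b:ℝ)^2*(b:ℝ)^k - 1 ≠ 0 := by rw [← e2]; exact h2
    rw [e1, e2, g1]
    field_simp
    ring
end
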